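/- Let f₁, f₂ ∈ I be nonzero with S(f₁) = S(f₂) = σ, and suppose there is no λ ∈ k \ {0} with f₁ = λ f₂. Then there exist α, β ∈ k \ {0} such that α f₁ + β f₂ ≠ 0 and S(α f₁ + β f₂) < σ. -/

import Mathlib

open MvPolynomial

namespace F5

noncomputable section
open scoped Classical

/-- Monomials (power products) in `n` variables, represented by exponent vectors. -/
abbrev Mon (n : ℕ) : Type := Fin n →₀ ℕ

/-- Module terms `t·eₗ` of the free module `Pᵐ`. -/
abbrev MTerm (n m : ℕ) : Type := (Fin n →₀ ℕ) × Fin m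

/-- Action of a monomial on a module term: `u • (t eₗ) = (u t) eₗ`. -/
def mact {n m : ℕ} (u : Mon n) (σ : MTerm n m) : MTerm n m := (u + σ.1, σ.2)

/-- An admissible order on monomials: a linear order with `1 ≤ t` and
compatibility with multiplication. -/
structure AdmissibleOrder (n : ℕ) where
  ord : LinearOrder (Mon n)
  one_le : ∀ t : Mon n, ord.le 0 t
  mul_lt_mul : ∀ s t u : Mon n, ord.lt s t → ord.lt (u + s) (u + t)

/-- An admissible module order on module terms: a linear well-order compatible
with the monomial action, and such that `σ ≤ u σ`. -/
structure ModuleOrder (n m : ℕ) where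
  ord : LinearOrder (MTerm n m)
  wf : WellFounded ord.lt
  mul_lt_mul : ∀ (σ τ : MTerm n m) (u : Mon n), ord.lt σ τ → ord.lt (mact u σ) (mact u τ)
  le_mul : ∀ (σ : MTerm n m) (u : Mon n), ord.le σ (mact u σ)

variable {k : Type*} [Field k] {n m : ℕ}

/-- The leading monomial of a polynomial with respect to `μ` (junk value `0` for `f = 0`). -/
noncomputable def pLT (μ : AdmissibleOrder n) (f : MvPolynomial (Fin n) k) : Mon n :=
  if h : f.support.Nonempty then @Finset.max' _ μ.ord f.support h else 0

/-- The leading coefficient of a polynomial with respect to `μ`. -/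
noncomputable def pLC (μ : AdmissibleOrder n) (f : MvPolynomial (Fin n) k) : k :=
  f.coeff (pLT μ f)

/-- The set (finset) of module terms occurring in an element of `Pᵐ`. -/
noncomputable def msupport (u : Fin m → MvPolynomial (Fin n) k) : Finset (MTerm n m) :=
  letI := Classical.decEq (MTerm n m)
  Finset.univ.biUnion fun l => (u l).support.image fun t => (t, l)

/-- A junk default module term (needs `m ≠ 0`). -/
def mdefault [NeZero m] : MTerm n m := (0, ⟨0, Nat.pos_of_ne_zero (NeZero.ne m)⟩)

/-- The leading module term of a nonzero element of `Pᵐ` with respect to `μ'`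
(junk value for `0`). -/
noncomputable def mLT [NeZero m] (μ' : ModuleOrder n m) (u : Fin m → MvPolynomial (Fin n) k) :
    MTerm n m :=
  if h : (msupport u).Nonempty then @Finset.max' _ μ'.ord _ h else mdefault

/-- The map `v : Pᵐ → P`, `v(eᵢ) = fᵢ`. -/
noncomputable def vmap (F : Fin m → MvPolynomial (Fin n) k)
    (u : Fin m → MvPolynomial (Fin n) k) : MvPolynomial (Fin n) k :=
  ∑ i, u i * F i

/-- The ideal `I = (f₁, …, fₘ)`. -/
noncomputable def idealI (F : Fin m → MvPolynomial (Fin n) k) : Ideal (MvPolynomial (Fin n) k) :=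
  Ideal.span (Set.range F)

/-- `LT(Syz F)`: leading module terms of nonzero syzygies of `F`. -/
def LTSyz [NeZero m] (μ' : ModuleOrder n m) (F : Fin m → MvPolynomial (Fin n) k) :
    Set (MTerm n m) :=
  {σ | ∃ s : Fin m → MvPolynomial (Fin n) k, s ≠ 0 ∧ vmap F s = 0 ∧ mLT μ' s = σ}

/-- The signature `S(f)`: the `μ'`-minimum of `{LT(u) : v(u) = f}` (junk for `f = 0` or
`f ∉ I`). -/
noncomputable def sig [NeZero m] (μ' : ModuleOrder n m) (F : Fin m → MvPolynomial (Fin n) k)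
    (f : MvPolynomial (Fin n) k) : MTerm n m :=
  if hne : {σ : MTerm n m |
      ∃ u : Fin m → MvPolynomial (Fin n) k, u ≠ 0 ∧ vmap F u = f ∧ mLT μ' u = σ}.Nonempty
  then μ'.wf.min _ hne else mdefault

/-- `f` S-reduces to `g` with `h`, with respect to `σ`. -/
noncomputable def SReduces [NeZero m] (μ : AdmissibleOrder n) (μ' : ModuleOrder n m)
    (F : Fin m → MvPolynomial (Fin n) k)
    (f h g : MvPolynomial (Fin n) k) (σ : MTerm n m) : Prop :=
  ∃ (t : Mon n) (α : k), α ≠ 0 ∧ g = f - (monomial t α) * h ∧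
    (g = 0 ∨ μ.ord.lt (pLT μ g) (pLT μ f)) ∧
    μ'.ord.lt (sig μ' F ((monomial t (1 : k)) * h)) σ

/-- `f` is S-irreducible with respect to `σ`. -/
noncomputable def SIrr [NeZero m] (μ : AdmissibleOrder n) (μ' : ModuleOrder n m)
    (F : Fin m → MvPolynomial (Fin n) k) (f : MvPolynomial (Fin n) k) (σ : MTerm n m) : Prop :=
  f = 0 ∨ ¬ ∃ h : MvPolynomial (Fin n) k, h ∈ idealI F ∧ h ≠ 0 ∧
    ∃ g : MvPolynomial (Fin n) k, SReduces μ μ' F f h g σ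

/-- `G` is an S-Gröbner basis (of `I` w.r.t. `μ`, `F`, `μ'`). -/
noncomputable def IsSGB [NeZero m] (μ : AdmissibleOrder n) (μ' : ModuleOrder n m)
    (F : Fin m → MvPolynomial (Fin n) k) (G : Set (MvPolynomial (Fin n) k)) : Prop :=
  (∀ g ∈ G, g ∈ idealI F ∧ g ≠ 0) ∧
  ∀ f : MvPolynomial (Fin n) k, f ∈ idealI F → f ≠ 0 → SIrr μ μ' F f (sig μ' F f) →
    ∃ g ∈ G, ∃ t : Mon n,
      pLT μ ((monomial t (1 : k)) * g) = pLT μ f ∧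
      sig μ' F ((monomial t (1 : k)) * g) = sig μ' F f

/-- `LT(I)`: the set of leading monomials of nonzero elements of `I`. -/
def LTIdeal (μ : AdmissibleOrder n) (F : Fin m → MvPolynomial (Fin n) k) : Set (Mon n) :=
  {t | ∃ f : MvPolynomial (Fin n) k, f ∈ idealI F ∧ f ≠ 0 ∧ pLT μ f = t}

/-- `φ(t)`: the `μ'`-minimum signature of nonzero elements of `I` with leading monomial `t`. -/
noncomputable def phi [NeZero m] (μ : AdmissibleOrder n) (μ' : ModuleOrder n m)
    (F : Fin m → MvPolynomial (Fin n) k) (t : Mon n) : MTerm n m :=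
  if hne : {σ : MTerm n m | ∃ f : MvPolynomial (Fin n) k,
      f ∈ idealI F ∧ f ≠ 0 ∧ pLT μ f = t ∧ sig μ' F f = σ}.Nonempty
  then μ'.wf.min _ hne else mdefault

/-- `f` is a primitive S-irreducible polynomial. -/
noncomputable def PrimSIrr [NeZero m] (μ : AdmissibleOrder n) (μ' : ModuleOrder n m)
    (F : Fin m → MvPolynomial (Fin n) k) (f : MvPolynomial (Fin n) k) : Prop :=
  f ∈ idealI F ∧ f ≠ 0 ∧ SIrr μ μ' F f (sig μ' F f) ∧
  ¬ ∃ (f' : MvPolynomial (Fin n) k) (t : Mon n),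
      f' ∈ idealI F ∧ f' ≠ 0 ∧ t ≠ 0 ∧ SIrr μ μ' F f' (sig μ' F f') ∧
      pLT μ ((monomial t (1 : k)) * f') = pLT μ f ∧
      sig μ' F ((monomial t (1 : k)) * f') = sig μ' F f

/-- The lcm of two monomials (pointwise maximum of exponents). -/
def lcmMon {n : ℕ} (s t : Mon n) : Mon n := t + (s - t)

/-- The term `u₁ = lcm(LT g₁, LT g₂)/(LC g₁ · LT g₁)` (when the first argument is `g₁`). -/
noncomputable def uterm (μ : AdmissibleOrder n) (g₁ g₂ : MvPolynomial (Fin n) k) :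
    MvPolynomial (Fin n) k :=
  monomial (lcmMon (pLT μ g₁) (pLT μ g₂) - pLT μ g₁) (pLC μ g₁)⁻¹

/-- The S-polynomial of `g₁` and `g₂`. -/
noncomputable def Spol (μ : AdmissibleOrder n) (g₁ g₂ : MvPolynomial (Fin n) k) :
    MvPolynomial (Fin n) k :=
  uterm μ g₁ g₂ * g₁ - uterm μ g₂ g₁ * g₂

/-- `(g₁, g₂)` is a normal pair. -/
noncomputable def NormalPair [NeZero m] (μ : AdmissibleOrder n) (μ' : ModuleOrder n m)
    (F : Fin m → MvPolynomial (Fin n) k) (g₁ g₂ : MvPolynomial (Fin n) k) : Prop :=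
  PrimSIrr μ μ' F g₁ ∧ PrimSIrr μ μ' F g₂ ∧
  sig μ' F (uterm μ g₁ g₂ * g₁) =
    mact (lcmMon (pLT μ g₁) (pLT μ g₂) - pLT μ g₁) (sig μ' F g₁) ∧
  sig μ' F (uterm μ g₂ g₁ * g₂) =
    mact (lcmMon (pLT μ g₂) (pLT μ g₁) - pLT μ g₂) (sig μ' F g₂) ∧
  sig μ' F (uterm μ g₁ g₂ * g₁) ≠ sig μ' F (uterm μ g₂ g₁ * g₂)


end
end F5

open F5 MvPolynomial

/-!
Write `f₁ = v(u₁)` and `f₂ = v(u₂)` with `LT(u₁) = LT(u₂) = σ`, and let `c₁, c₂` be the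
coefficients of `σ` in `u₁, u₂`. The combination `w = c₂ u₁ - c₁ u₂` cancels the term `σ`, so
all its terms are below `σ`, and `v(w) = c₂ f₁ - c₁ f₂` is nonzero because `f₁` is not a scalar
multiple of `f₂`. Hence `S(c₂ f₁ - c₁ f₂) ≤ LT(w) < σ`.
-/

namespace F5

variable {k : Type*} [Field k] {n m : ℕ}

def mcoeff (τ : MTerm n m) (u : Fin m → MvPolynomial (Fin n) k) : k :=
  (u τ.2).coeff τ.1

@[simp]
lemma mcoeff_add_smul (τ : MTerm n m) (a b : k) (u v : Fin m → MvPolynomial (Fin n) k) :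
    mcoeff τ (a • u + b • v) = a * mcoeff τ u + b * mcoeff τ v := by
  simp [mcoeff, coeff_smul]

lemma mem_msupport_iff {u : Fin m → MvPolynomial (Fin n) k} {τ : MTerm n m} :
    τ ∈ msupport u ↔ mcoeff τ u ≠ 0 := by
  obtain ⟨t, l⟩ := τ
  simp only [msupport, mcoeff, Finset.mem_biUnion, Finset.mem_univ, true_and, Finset.mem_image,
    Prod.mk.injEq, ← mem_support_iff]
  constructor
  · rintro ⟨l', t', ht', rfl, rfl⟩
    exact ht'
  · exact fun h => ⟨l, t, h, rfl, rfl⟩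

lemma msupport_nonempty {u : Fin m → MvPolynomial (Fin n) k} (hu : u ≠ 0) :
    (msupport u).Nonempty := by
  obtain ⟨l, hl⟩ := Function.ne_iff.1 hu
  obtain ⟨t, ht⟩ := support_nonempty.2 hl
  exact ⟨(t, l), mem_msupport_iff.2 (mem_support_iff.1 ht)⟩

section LeadingTerm

variable [NeZero m] (μ' : ModuleOrder n m)

lemma mLT_mem {u : Fin m → MvPolynomial (Fin n) k} (hu : u ≠ 0) : mLT μ' u ∈ msupport u := by
  rw [mLT, dif_pos (msupport_nonempty hu)]
  exact @Finset.max'_mem _ μ'.ord _ _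

lemma le_mLT {u : Fin m → MvPolynomial (Fin n) k} {τ : MTerm n m} (hτ : τ ∈ msupport u) :
    μ'.ord.le τ (mLT μ' u) := by
  rw [mLT, dif_pos ⟨τ, hτ⟩]
  exact @Finset.le_max' _ μ'.ord _ _ hτ

lemma mcoeff_mLT_ne_zero {u : Fin m → MvPolynomial (Fin n) k} (hu : u ≠ 0) :
    mcoeff (mLT μ' u) u ≠ 0 :=
  mem_msupport_iff.1 (mLT_mem μ' hu)

lemma mLT_add_smul_lt {u v : Fin m → MvPolynomial (Fin n) k} {σ : MTerm n m} {a b : k}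
    (hu : mLT μ' u = σ) (hv : mLT μ' v = σ) (hw : a • u + b • v ≠ 0)
    (hcancel : a * mcoeff σ u + b * mcoeff σ v = 0) :
    μ'.ord.lt (mLT μ' (a • u + b • v)) σ := by
  set τ := mLT μ' (a • u + b • v)
  have hτ : a * mcoeff τ u + b * mcoeff τ v ≠ 0 := by
    simpa using mcoeff_mLT_ne_zero μ' hw
  have hle : μ'.ord.le τ σ := by
    by_cases hτu : mcoeff τ u = 0
    · have hτv : mcoeff τ v ≠ 0 := fun h => hτ (by simp [hτu, h])
      exact hv ▸ le_mLT μ' (mem_msupport_iff.2 hτv)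
    · exact hu ▸ le_mLT μ' (mem_msupport_iff.2 hτu)
  exact @lt_of_le_of_ne _ μ'.ord.toPartialOrder _ _ hle fun h => hτ (h ▸ hcancel)

end LeadingTerm

section Signature

variable (F : Fin m → MvPolynomial (Fin n) k)

lemma vmap_add_smul (a b : k) (u v : Fin m → MvPolynomial (Fin n) k) :
    vmap F (a • u + b • v) = a • vmap F u + b • vmap F v := by
  simp only [vmap, Pi.add_apply, Pi.smul_apply, add_mul, smul_mul_assoc, Finset.sum_add_distrib,
    Finset.smul_sum]

lemma exists_vmap_eq {f : MvPolynomial (Fin n) k} (hf : f ∈ idealI F) :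
    ∃ u, vmap F u = f := by
  obtain ⟨c, hc⟩ := (Submodule.mem_span_range_iff_exists_fun _).1 hf
  exact ⟨c, by simpa [vmap, smul_eq_mul] using hc⟩

variable [NeZero m] (μ' : ModuleOrder n m)

lemma sig_vmap_le_mLT {u : Fin m → MvPolynomial (Fin n) k} (hu : u ≠ 0) :
    μ'.ord.le (sig μ' F (vmap F u)) (mLT μ' u) := by
  have hmem : mLT μ' u ∈ {σ | ∃ u', u' ≠ 0 ∧ vmap F u' = vmap F u ∧ mLT μ' u' = σ} :=
    ⟨u, hu, rfl, rfl⟩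
  rw [sig, dif_pos ⟨_, hmem⟩]
  exact (@not_lt _ μ'.ord _ _).1 (μ'.wf.not_lt_min _ hmem)

lemma exists_mLT_eq_sig {f : MvPolynomial (Fin n) k} (hf : f ∈ idealI F) (hf0 : f ≠ 0) :
    ∃ u, u ≠ 0 ∧ vmap F u = f ∧ mLT μ' u = sig μ' F f := by
  obtain ⟨u, hu⟩ := exists_vmap_eq F hf
  have hu0 : u ≠ 0 := by
    rintro rfl
    exact hf0 (by simp [← hu, vmap])
  have hne : {σ | ∃ u', u' ≠ 0 ∧ vmap F u' = f ∧ mLT μ' u' = σ}.Nonempty :=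
    ⟨_, u, hu0, hu, rfl⟩
  rw [sig, dif_pos hne]
  exact μ'.wf.min_mem _ hne

end Signature

end F5

/-- if `S(f₁) = S(f₂) = σ` and `f₁` is not a nonzero scalar multiple of `f₂`,
then there are nonzero `α, β` with `α f₁ + β f₂ ≠ 0` and `S(α f₁ + β f₂) < σ`. -/
theorem stmt_1 {k : Type*} [Field k] {n m : ℕ} [NeZero m]
    (μ' : ModuleOrder n m) (F : Fin m → MvPolynomial (Fin n) k)
    (f₁ f₂ : MvPolynomial (Fin n) k) (σ : MTerm n m)
    (hf₁I : f₁ ∈ idealI F) (hf₂I : f₂ ∈ idealI F)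
    (hf₁ : f₁ ≠ 0) (hf₂ : f₂ ≠ 0)
    (hσ₁ : sig μ' F f₁ = σ) (hσ₂ : sig μ' F f₂ = σ)
    (hnp : ¬ ∃ lam : k, lam ≠ 0 ∧ f₁ = lam • f₂) :
    ∃ α β : k, α ≠ 0 ∧ β ≠ 0 ∧ α • f₁ + β • f₂ ≠ 0 ∧
      μ'.ord.lt (sig μ' F (α • f₁ + β • f₂)) σ := by
  obtain ⟨u₁, hu₁, rfl, hσu₁⟩ := exists_mLT_eq_sig F μ' hf₁I hf₁
  obtain ⟨u₂, hu₂, rfl, hσu₂⟩ := exists_mLT_eq_sig F μ' hf₂I hf₂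
  rw [hσ₁] at hσu₁
  rw [hσ₂] at hσu₂
  have hc₁ := hσu₁ ▸ mcoeff_mLT_ne_zero μ' hu₁
  have hc₂ := hσu₂ ▸ mcoeff_mLT_ne_zero μ' hu₂
  set c₁ := mcoeff σ u₁
  set c₂ := mcoeff σ u₂
  have hg : c₂ • vmap F u₁ + (-c₁) • vmap F u₂ ≠ 0 := by
    intro h
    refine hnp ⟨c₂⁻¹ * c₁, by simp [hc₁, hc₂], ?_⟩
    rw [mul_smul, eq_inv_smul_iff₀ hc₂, ← sub_eq_zero]
    simpa [sub_eq_add_neg] using h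
  have hw : c₂ • u₁ + (-c₁) • u₂ ≠ 0 := fun h => hg (by rw [← vmap_add_smul, h]; simp [vmap])
  refine ⟨c₂, -c₁, hc₂, neg_ne_zero.2 hc₁, hg, ?_⟩
  rw [← vmap_add_smul]
  exact @lt_of_le_of_lt _ μ'.ord.toPreorder _ _ _
    (sig_vmap_le_mLT F μ' hw) (mLT_add_smul_lt μ' hσu₁ hσu₂ hw (by ring))
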